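/- Assume β > 3 and α = 1/β, and let h : L^{α,β} → L^{α,β} be h(w) = ŵ. The restriction of h to L^a = {w ∈ L^{α,β} : s(w) ∈ P^a∖{ε}} is injective and h(L^a) ⊆ L^ε ∪ L^b. -/

import Mathlib

open Filter Topology MeasureTheory ENNReal
open scoped Classical

noncomputable section

namespace AB

/-- The (α,β)-transformation `T(x) = βx + α − ⌊βx + α⌋`. -/
def T (α β : ℝ) (x : ℝ) : ℝ := β * x + α - ⌊β * x + α⌋

/-- `λ = ⌈α+β⌉ − 1`, as a natural number. -/
def lamNat (α β : ℝ) : ℕ := (⌈α + β⌉ - 1).toNat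

/-- The digit of `x ∈ [0,1)`: the index `k` with `x ∈ J_k`, namely `⌊βx + α⌋`. -/
def digit (α β : ℝ) (x : ℝ) : ℕ := (⌊β * x + α⌋).toNat

/-- The (α,β)-expansion of `x`. -/
def iSeq (α β : ℝ) (x : ℝ) : ℕ → ℕ := fun n => digit α β ((T α β)^[n] x)

/-- The one-sided (α,β)-shift: closure (in the product topology) of the set of expansions. -/
def Xab (α β : ℝ) : Set (ℕ → ℕ) :=
  closure {s | ∃ x ∈ Set.Ico (0 : ℝ) 1, s = iSeq α β x}

/-- Word of given length read in a one-sided sequence starting at position `k`. -/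
def wordN (s : ℕ → ℕ) (k len : ℕ) : List ℕ := (List.range len).map fun i => s (k + i)

/-- The language of the (α,β)-shift: finite words appearing in points of `Xab`. -/
def Lang (α β : ℝ) : Set (List ℕ) :=
  {w | ∃ s ∈ Xab α β, ∃ k : ℕ, w = wordN s k w.length}

/-- `a = i_{α,β}(0)`. -/
def aSeq (α β : ℝ) : ℕ → ℕ := iSeq α β 0

/-- The prefix of length `l` of a sequence, as a word. -/
def pre (s : ℕ → ℕ) (l : ℕ) : List ℕ := (List.range l).map s

/-- Lexicographic (non-strict) order on words. -/
def wordLe (u v : List ℕ) : Prop := u = v ∨ List.Lex (· < ·) u v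

/-- Lexicographic (non-strict) order on one-sided sequences. -/
def seqLe (x y : ℕ → ℕ) : Prop :=
  x = y ∨ ∃ n : ℕ, (∀ i < n, x i = y i) ∧ x n < y n

/-- The largest `k ≤ |w|` such that the length-`k` suffix of `w` equals the length-`k`
prefix of `s` (this is `k1` for `s = a` and `k2` for `s = b`). -/
def kk (s : ℕ → ℕ) (w : List ℕ) : ℕ :=
  Nat.findGreatest (fun k => w.drop (w.length - k) = pre s k) w.length

/-- The set of finite prefixes of a sequence (`P^a`, `P^b`). -/
def Pset (s : ℕ → ℕ) : Set (List ℕ) := {u | ∃ l : ℕ, u = pre s l}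

/-- The distinguished suffix `s(w)`. -/
def sWord (a b : ℕ → ℕ) (w : List ℕ) : List ℕ :=
  if kk b w < kk a w then w.drop (w.length - kk a w)
  else if kk a w < kk b w then w.drop (w.length - kk b w)
  else []

/-- The hat operation on `P = P^a ∪ P^b` (for `β > 3`, `α = 1/β`). -/
def hatP (a b : ℕ → ℕ) (lam : ℕ) (u : List ℕ) : List ℕ :=
  if u = [] then []
  else if u ∈ Pset a then u.dropLast ++ [u.getLast?.getD 0 + 1]
  else if 3 ≤ u.getLast?.getD 0 then u.dropLast ++ [u.getLast?.getD 0 - 1]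
  else
    (u.set (u.length - kk a u.dropLast - 2) (u.getD (u.length - kk a u.dropLast - 2) 0 - 1)).set
      (u.length - kk a u.dropLast - 1) (lam - 1)

/-- `ŵ` for `w = v·s(w)`: replace the distinguished suffix by its hat. -/
def hatW (a b : ℕ → ℕ) (lam : ℕ) (w : List ℕ) : List ℕ :=
  w.take (w.length - (sWord a b w).length) ++ hatP a b lam (sWord a b w)

/-- `w̃`: the hat operation applied twice. -/
def tildeW (a b : ℕ → ℕ) (lam : ℕ) (w : List ℕ) : List ℕ :=
  hatW a b lam (hatW a b lam w)

/-- `z(u)` for `u ∈ P^b`. -/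
def zP (a b : ℕ → ℕ) (u : List ℕ) : ℕ :=
  if u = [] then 0
  else sSup ({k : ℕ | (u ++ pre (fun i => a (kk a u + i)) k) ∈ Pset b} ∪ {0})

/-- `z(w)` for a word `w` in the language. -/
def zW (a b : ℕ → ℕ) (w : List ℕ) : ℕ :=
  if kk a w < kk b w then zP a b (w.drop (w.length - kk b w)) else 0

/-- `z̄(n) = max{z(u) : u prefix of b, |u| ≤ n}`. -/
def zbar (a b : ℕ → ℕ) (n : ℕ) : ℕ :=
  (Finset.range (n + 1)).sup fun l => zP a b (pre b l)

/-- The natural extension `Σ^{α,β}`. -/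
def SigmaAB (α β : ℝ) : Set (ℤ → ℕ) :=
  {x | ∀ k : ℤ, (fun n : ℕ => x (k + n)) ∈ Xab α β}

/-- `σ^j` on two-sided sequences. -/
def shiftI {A : Type*} (j : ℤ) (x : ℤ → A) : ℤ → A := fun n => x (n + j)

/-- Word of given length read in a two-sided sequence starting at position `k`. -/
def wordZ (x : ℤ → ℕ) (k : ℤ) (len : ℕ) : List ℕ := (List.range len).map fun i => x (k + i)

/-- The map `g : L^{α,β} → {0,1}`. -/
def gW (a b : ℕ → ℕ) (w : List ℕ) : ℕ :=
  if kk a w = 0 ∧ 0 < kk b w ∧ b (kk b w) ≤ 1 then 0 else 1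

/-- `w^♯`: the word `w` placed at positions `k,…,k+|w|−1`, followed by `g(w)` at
position `k+|w|`, and `1` at all other positions. -/
def wSharp (a b : ℕ → ℕ) (k : ℤ) (w : List ℕ) : ℤ → ℕ :=
  fun j => if k ≤ j ∧ j < k + w.length then w.getD (j - k).toNat 1
           else if j = k + w.length then gW a b w else 1

/-- The finite approximation sets `E^n ⊆ Σ^{α,β}`. -/
def En (α β : ℝ) (b : ℕ → ℕ) (n : ℕ) : Set (ℤ → ℕ) :=
  {x | wordZ x (-(n : ℤ)) (2 * n + 1) ∈ Lang α β ∧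
       x ((n : ℤ) + 1) = gW (aSeq α β) b (wordZ x (-(n : ℤ)) (2 * n + 1)) ∧
       ∀ j : ℤ, j < -(n : ℤ) ∨ (n : ℤ) + 1 < j → x j = 1}

/-- `s(x_k^-) = ε` for the left-infinite word `x_{(-∞,k-1]}`: no nonempty suffix of it is a
prefix of `a` or of `b`. -/
def leftStar (a b : ℕ → ℕ) (x : ℤ → ℕ) (k : ℤ) : Prop :=
  (∀ K : ℕ, 1 ≤ K → ¬ ∀ i : ℕ, i < K → x (k - K + i) = a i) ∧
  (∀ K : ℕ, 1 ≤ K → ¬ ∀ i : ℕ, i < K → x (k - K + i) = b i)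

/-- `E^n_{[k,l]}(v)`. -/
def EnCyl (α β : ℝ) (b : ℕ → ℕ) (n : ℕ) (k l : ℤ) (v : List ℕ) : Set (ℤ → ℕ) :=
  {x ∈ En α β b n | wordZ x k (l - k + 1).toNat = v}

/-- `E^{*,n}_{[k,l]}(v)`. -/
def EnCylStar (α β : ℝ) (b : ℕ → ℕ) (n : ℕ) (k l : ℤ) (v : List ℕ) : Set (ℤ → ℕ) :=
  {x ∈ EnCyl α β b n k l v | leftStar (aSeq α β) b x k}

/-- The Birkhoff sum `∑_{j=−n}^{n} φ(σ^j x)`. -/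
def birkhoff (φ : (ℤ → ℕ) → ℝ) (n : ℕ) (x : ℤ → ℕ) : ℝ :=
  ∑ j ∈ Finset.Icc (-(n : ℤ)) (n : ℤ), φ (shiftI j x)

/-- `Ξ^n_{[k,l]}(v)`. -/
def Xi (α β : ℝ) (b : ℕ → ℕ) (φ : (ℤ → ℕ) → ℝ) (n : ℕ) (k l : ℤ) (v : List ℕ) : ℝ :=
  ∑' x : (EnCyl α β b n k l v), Real.exp (birkhoff φ n x.1)

/-- `Ξ^{*,n}_{[k,l]}(v)`. -/
def XiStar (α β : ℝ) (b : ℕ → ℕ) (φ : (ℤ → ℕ) → ℝ) (n : ℕ) (k l : ℤ) (v : List ℕ) : ℝ :=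
  ∑' x : (EnCylStar α β b n k l v), Real.exp (birkhoff φ n x.1)

/-- `δ_i(f)`, as an extended nonnegative real. -/
def oscE {A : Type*} (f : (ℤ → A) → ℝ) (i : ℤ) : ℝ≥0∞ :=
  ⨆ (x : ℤ → A) (y : ℤ → A) (_ : ∀ k : ℤ, k ≠ i → x k = y k), ENNReal.ofReal |f x - f y|

/-- `‖f‖_δ` for a function on the full shift. -/
def enormFull {A : Type*} (f : (ℤ → A) → ℝ) : ℝ≥0∞ := ∑' i : ℤ, oscE f i

/-- `‖f‖_δ` for a function on a subshift `X`: infimum over continuous extensions. -/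
def enormOn {A : Type*} [TopologicalSpace A] (X : Set (ℤ → A)) (f : (ℤ → A) → ℝ) : ℝ≥0∞ :=
  ⨅ (g : (ℤ → A) → ℝ) (_ : Continuous g) (_ : ∀ x ∈ X, g x = f x), enormFull g

/-- `f` has bounded total oscillations on `X` (i.e. `f ∈ B(X)`). -/
def BTO {A : Type*} [TopologicalSpace A] (X : Set (ℤ → A)) (f : (ℤ → A) → ℝ) : Prop :=
  ContinuousOn f X ∧ enormOn X f ≠ ⊤

/-- The real value of `‖f‖_δ`. -/
def dnorm {A : Type*} [TopologicalSpace A] (X : Set (ℤ → A)) (f : (ℤ → A) → ℝ) : ℝ :=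
  (enormOn X f).toReal

/-- The pressure `p(φ)`. -/
def pressure (α β : ℝ) (b : ℕ → ℕ) (φ : (ℤ → ℕ) → ℝ) : ℝ :=
  limUnder atTop fun n : ℕ =>
    Real.log (∑' x : (En α β b n), Real.exp (birkhoff φ n x.1)) / (2 * n + 1)

/-- `ν` is a tangent functional to the pressure at `φ` (an equilibrium measure for `φ`). -/
def IsTangent (α β : ℝ) (b : ℕ → ℕ) (φ : (ℤ → ℕ) → ℝ) (ν : Measure (ℤ → ℕ)) : Prop :=
  ∀ f : (ℤ → ℕ) → ℝ, ContinuousOn f (SigmaAB α β) →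
    pressure α β b φ + ∫ x, f x ∂ν ≤ pressure α β b (fun x => φ x + f x)

/-- The cylinder `[x_1 … x_m]` in `Σ^{α,β}`. -/
def cyl (α β : ℝ) (x : ℤ → ℕ) (m : ℕ) : Set (ℤ → ℕ) :=
  {y ∈ SigmaAB α β | ∀ i : ℕ, 1 ≤ i → i ≤ m → y (i : ℤ) = x (i : ℤ)}

/-- `ν` is a weak Gibbs measure for `ψ` on `Σ^{α,β}`. -/
def WeakGibbs (α β : ℝ) (ν : Measure (ℤ → ℕ)) (ψ : (ℤ → ℕ) → ℝ) : Prop :=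
  ∀ δ : ℝ, 0 < δ → ∃ N : ℕ, ∀ m : ℕ, N ≤ m → ∀ x ∈ SigmaAB α β,
    |Real.log (ν (cyl α β x m)).toReal / m -
      (∑ l ∈ Finset.Icc (1 : ℤ) (m : ℤ), ψ (shiftI l x)) / m| ≤ δ

/-- Concatenation `w·x` of a word and a one-sided sequence. -/
def wordApp (w : List ℕ) (x : ℕ → ℕ) : ℕ → ℕ :=
  fun n => if n < w.length then w.getD n 1 else x (n - w.length)

/-- `σ^k` on one-sided sequences. -/
def shiftN (k : ℕ) (s : ℕ → ℕ) : ℕ → ℕ := fun n => s (k + n)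

end AB

/-!
For `α = 1 / β` the expansion of `0` is `a = 0 1 1 1 …` while `b` starts with a letter `≥ 3`. So for
`w ∈ L^a` the suffix `s(w)` is a prefix of `a`, `ŵ` is `w` with its last letter raised by one, and
injectivity is clear.

To see `ŵ ∈ L`, write `w` as the first `n` digits of some `y` and move `x` to the right of `y`: these
digits do not change until one of `T^[j] x`, `j ≤ n`, reaches `1`. If `j = n` gets there strictly
first, the last digit goes up by one at that point, which gives `ŵ`. Otherwise some `i < n` gets
there no later, the next `n - i` digits of `T^[i] x` stay those of `T^[i] y` all the way up to `1`,
hence are those of the left limit `b`, and the suffix of `w` starting at `i` is a prefix of `b`.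
As `k₂(w) < k₁(w)`, that suffix would also be a suffix of `s(w)`, so it would start with a letter
`≤ 1`.

Finally no nonempty suffix of `ŵ` is a prefix of `a`, since `0 1^k` is never followed by `0` in an
expansion; hence `s(ŵ)` is `ε` or a nonempty prefix of `b`.
-/

namespace AB

theorem pre_succ (s : ℕ → ℕ) (n : ℕ) : pre s (n + 1) = pre s n ++ [s n] := by
  simp [pre, List.range_succ]

theorem pre_eq_pre_iff {s t : ℕ → ℕ} {n : ℕ} : pre s n = pre t n ↔ ∀ j < n, s j = t j := by
  simp [pre, List.map_inj_left]

theorem drop_pre (s : ℕ → ℕ) (n i : ℕ) :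
    (pre s n).drop i = pre (fun j => s (i + j)) (n - i) := by
  apply List.ext_getElem <;> simp [pre]

section Dynamics

variable {α β : ℝ} {b : ℕ → ℕ}

theorem iterate_T_mem_Ico {y : ℝ} (hy : y ∈ Set.Ico (0 : ℝ) 1) :
    ∀ j, (T α β)^[j] y ∈ Set.Ico (0 : ℝ) 1
  | 0 => hy
  | j + 1 => by
    rw [Function.iterate_succ_apply']
    exact ⟨Int.fract_nonneg _, Int.fract_lt_one _⟩

theorem iSeq_add (x : ℝ) (i j : ℕ) : iSeq α β x (i + j) = iSeq α β ((T α β)^[i] x) j := by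
  rw [iSeq, iSeq, add_comm, Function.iterate_add_apply]

theorem T_eq_sub_digit {u : ℝ} (hu : 0 ≤ β * u + α) :
    T α β u = β * u + α - digit α β u := by
  rw [T, digit, ← Int.cast_natCast, Int.toNat_of_nonneg (Int.floor_nonneg.2 hu)]

theorem iterate_T_succ (hα : 0 ≤ α) (hβ : 0 ≤ β) {y : ℝ} (hy : y ∈ Set.Ico (0 : ℝ) 1)
    (j : ℕ) : (T α β)^[j + 1] y = β * (T α β)^[j] y + α - iSeq α β y j := by
  rw [Function.iterate_succ_apply', iSeq,
    T_eq_sub_digit (by have := (iterate_T_mem_Ico (α := α) (β := β) hy j).1; positivity)]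

theorem floor_add_of_fract_add_lt_one {v ε : ℝ} (hε : 0 ≤ ε) (h : Int.fract v + ε < 1) :
    ⌊v + ε⌋ = ⌊v⌋ := by
  rw [Int.floor_eq_iff]
  constructor <;> linarith [Int.floor_le v, Int.self_sub_floor v]

theorem T_add_of_lt_one {u ε : ℝ} (hε : 0 ≤ β * ε) (h : T α β u + β * ε < 1) :
    T α β (u + ε) = T α β u + β * ε ∧ digit α β (u + ε) = digit α β u := by
  have hv : β * (u + ε) + α = (β * u + α) + β * ε := by ring
  have hfloor := floor_add_of_fract_add_lt_one hε h
  refine ⟨?_, ?_⟩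
  · rw [T, T, hv, hfloor]
    ring
  · rw [digit, digit, hv, hfloor]

theorem digit_add_of_T_add_eq_one {u ε : ℝ} (hu : 0 ≤ β * u + α) (h : T α β u + β * ε = 1) :
    digit α β (u + ε) = digit α β u + 1 := by
  have hv : β * (u + ε) + α = ((⌊β * u + α⌋ + 1 : ℤ) : ℝ) := by
    rw [T] at h
    push_cast
    linarith
  rw [digit, digit, hv, Int.floor_intCast]
  exact Int.toNat_add_nat (Int.floor_nonneg.2 hu) 1

theorem iterate_T_add_of_lt_one (hβ : 0 ≤ β) {y δ : ℝ} (hδ : 0 ≤ δ) {m : ℕ}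
    (h : ∀ j ≤ m, (T α β)^[j] y + β ^ j * δ < 1) :
    ∀ j ≤ m, (T α β)^[j] (y + δ) = (T α β)^[j] y + β ^ j * δ
  | 0, _ => by simp
  | j + 1, hj => by
    have hstep := h (j + 1) hj
    rw [Function.iterate_succ_apply', pow_succ', mul_assoc] at hstep ⊢
    rw [Function.iterate_succ_apply', iterate_T_add_of_lt_one hβ hδ h j (by omega)]
    exact (T_add_of_lt_one (by positivity) hstep).1

theorem iSeq_add_of_lt_one (hβ : 0 ≤ β) {y δ : ℝ} (hδ : 0 ≤ δ) {m : ℕ}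
    (h : ∀ j ≤ m, (T α β)^[j] y + β ^ j * δ < 1) :
    ∀ j < m, iSeq α β (y + δ) j = iSeq α β y j := by
  intro j hj
  have hstep := h (j + 1) hj
  rw [Function.iterate_succ_apply', pow_succ', mul_assoc] at hstep
  rw [iSeq, iSeq, iterate_T_add_of_lt_one hβ hδ h j hj.le]
  exact (T_add_of_lt_one (by positivity) hstep).2

/-- `y + gap α β y j` is where the affine branch `x ↦ T^[j] y + β ^ j * (x - y)` of `T^[j]`
through `y` reaches `1`. -/
def gap (α β y : ℝ) (j : ℕ) : ℝ := (1 - (T α β)^[j] y) / β ^ j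

theorem pow_mul_gap (hβ : β ≠ 0) (y : ℝ) (j : ℕ) :
    β ^ j * gap α β y j = 1 - (T α β)^[j] y :=
  mul_div_cancel₀ _ (pow_ne_zero j hβ)

theorem eventually_iSeq_eq (hb : Tendsto (iSeq α β) (𝓝[<] (1 : ℝ)) (𝓝 b)) (j : ℕ) :
    ∀ᶠ x in 𝓝[<] (1 : ℝ), iSeq α β x j = b j :=
  tendsto_pure.1 (by simpa only [nhds_discrete] using tendsto_pi_nhds.1 hb j)

theorem iSeq_eq_of_forall_Ioo (hb : Tendsto (iSeq α β) (𝓝[<] (1 : ℝ)) (𝓝 b)) {z : ℝ}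
    (hz : z < 1) {K : ℕ} (h : ∀ x ∈ Set.Ioo z 1, ∀ j < K, iSeq α β x j = iSeq α β z j) :
    ∀ j < K, iSeq α β z j = b j := by
  have hnear : ∀ᶠ x in 𝓝[<] (1 : ℝ), ∀ j ∈ Set.Iio K, iSeq α β x j = b j :=
    (eventually_all_finite (Set.finite_Iio K)).2 fun j _ => eventually_iSeq_eq hb j
  obtain ⟨x, hxb, hx⟩ := (hnear.and (Ioo_mem_nhdsLT hz)).exists
  intro j hj
  rw [← h x hx j hj, hxb j hj]

theorem exists_pre_iSeq_succ_last (hα : 0 ≤ α) (hβ : 0 < β) {y : ℝ}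
    (hy : y ∈ Set.Ico (0 : ℝ) 1) {m : ℕ} (h : ∀ i ≤ m, gap α β y (m + 1) < gap α β y i) :
    ∃ x ∈ Set.Ico (0 : ℝ) 1,
      pre (iSeq α β x) (m + 1) = pre (iSeq α β y) m ++ [iSeq α β y m + 1] := by
  set δ := gap α β y (m + 1)
  have hδ : 0 ≤ δ :=
    div_nonneg (sub_nonneg.2 (iterate_T_mem_Ico hy _).2.le) (by positivity)
  have hlt : ∀ j ≤ m, (T α β)^[j] y + β ^ j * δ < 1 := fun j hj => by
    have := (lt_div_iff₀' (pow_pos hβ j)).1 (h j hj)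
    linarith
  refine ⟨y + δ, ⟨by linarith [hy.1], by simpa using hlt 0 (Nat.zero_le m)⟩, ?_⟩
  rw [pre_succ, pre_eq_pre_iff.2 (iSeq_add_of_lt_one hβ.le hδ hlt), iSeq, iSeq,
    iterate_T_add_of_lt_one hβ.le hδ hlt m le_rfl,
    digit_add_of_T_add_eq_one
      (by have := (iterate_T_mem_Ico (α := α) (β := β) hy m).1; positivity)]
  rw [← mul_assoc, ← pow_succ', pow_mul_gap hβ.ne', ← Function.iterate_succ_apply' (T α β)]
  ring

theorem iSeq_add_eq_of_gap_le (hβ : 0 < β) (hb : Tendsto (iSeq α β) (𝓝[<] (1 : ℝ)) (𝓝 b))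
    {y : ℝ} (hy : y ∈ Set.Ico (0 : ℝ) 1) {i K : ℕ}
    (h : ∀ j ≤ K, gap α β y i ≤ gap α β y (i + j)) :
    ∀ j < K, iSeq α β y (i + j) = b j := by
  set z := (T α β)^[i] y
  have hz : 1 - z = β ^ i * gap α β y i := (pow_mul_gap hβ.ne' y i).symm
  intro j hj
  rw [iSeq_add]
  refine iSeq_eq_of_forall_Ioo hb (iterate_T_mem_Ico hy i).2 (fun x hx => ?_) j hj
  have key := iSeq_add_of_lt_one (m := K) hβ.le (sub_nonneg.2 hx.1.le) fun j hj => calc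
    (T α β)^[j] z + β ^ j * (x - z) < (T α β)^[j] z + β ^ j * (1 - z) := by
      gcongr
      exact hx.2
    _ = (T α β)^[j] z + β ^ (i + j) * gap α β y i := by rw [hz, pow_add]; ring
    _ ≤ (T α β)^[j] z + β ^ (i + j) * gap α β y (i + j) := by gcongr; exact h j hj
    _ = 1 := by rw [pow_mul_gap hβ.ne', add_comm i, Function.iterate_add_apply]; ring
  rwa [add_sub_cancel] at key

end Dynamics

section Language

variable {α β : ℝ} {b : ℕ → ℕ}

theorem mem_Lang_iff {w : List ℕ} :
    w ∈ Lang α β ↔ ∃ y ∈ Set.Ico (0 : ℝ) 1, w = pre (iSeq α β y) w.length := by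
  constructor
  · rintro ⟨s, hs, k, hw⟩
    set U : Set (ℕ → ℕ) := ⋂ j ∈ Finset.range w.length, {t | t (k + j) = s (k + j)}
    have hU : IsOpen U := isOpen_biInter_finset fun j _ =>
      (isOpen_discrete {s (k + j)}).preimage (continuous_apply (A := fun _ => ℕ) (k + j))
    obtain ⟨_, hxU, x, hx, rfl⟩ := mem_closure_iff.1 hs U hU (by simp [U])
    refine ⟨(T α β)^[k] x, iterate_T_mem_Ico hx k, ?_⟩
    refine hw.trans (pre_eq_pre_iff.2 fun j hj => ?_)
    rw [← iSeq_add]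
    exact (Set.mem_iInter₂.1 hxU j (Finset.mem_range.2 hj)).symm
  · rintro ⟨y, hy, hw⟩
    exact ⟨iSeq α β y, subset_closure ⟨y, hy, rfl⟩, 0, by simpa [wordN, pre] using hw⟩

theorem exists_pre_iSeq_succ_last_or_suffix_eq (hα : 0 ≤ α) (hβ : 0 < β)
    (hb : Tendsto (iSeq α β) (𝓝[<] (1 : ℝ)) (𝓝 b)) {y : ℝ} (hy : y ∈ Set.Ico (0 : ℝ) 1)
    (m : ℕ) :
    (∃ x ∈ Set.Ico (0 : ℝ) 1,
      pre (iSeq α β x) (m + 1) = pre (iSeq α β y) m ++ [iSeq α β y m + 1]) ∨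
    ∃ i ≤ m, ∀ j < m + 1 - i, iSeq α β y (i + j) = b j := by
  by_cases h : ∀ i ≤ m, gap α β y (m + 1) < gap α β y i
  · exact Or.inl (exists_pre_iSeq_succ_last hα hβ hy h)
  push Not at h
  obtain ⟨i₀, hi₀, hgap⟩ := h
  obtain ⟨i, hi, hmin⟩ := (Finset.range (m + 1)).exists_min_image (gap α β y)
    ⟨i₀, Finset.mem_range.2 (Nat.lt_succ_of_le hi₀)⟩
  rw [Finset.mem_range] at hi
  refine Or.inr ⟨i, Nat.le_of_lt_succ hi, iSeq_add_eq_of_gap_le hβ hb hy fun j hj => ?_⟩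
  rcases (show i + j ≤ m ∨ i + j = m + 1 by omega) with hle | heq
  · exact hmin _ (Finset.mem_range.2 (Nat.lt_succ_of_le hle))
  · rw [heq]
    exact (hmin i₀ (Finset.mem_range.2 (Nat.lt_succ_of_le hi₀))).trans hgap

theorem modifyLast_succ_mem_Lang (hα : 0 ≤ α) (hβ : 0 < β)
    (hb : Tendsto (iSeq α β) (𝓝[<] (1 : ℝ)) (𝓝 b)) {w : List ℕ} (hw : w ∈ Lang α β)
    (hsuf : ∀ i < w.length, w.drop i ≠ pre b (w.length - i)) :
    w.modifyLast (· + 1) ∈ Lang α β := by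
  obtain ⟨y, hy, hwy⟩ := mem_Lang_iff.1 hw
  rcases hn : w.length with _ | m
  · obtain rfl := List.length_eq_zero_iff.1 hn
    exact hw
  rw [hn, pre_succ] at hwy
  rcases exists_pre_iSeq_succ_last_or_suffix_eq hα hβ hb hy m with ⟨x, hx, hxy⟩ | ⟨i, hi, hib⟩
  · rw [hwy, List.modifyLast_concat]
    exact mem_Lang_iff.2 ⟨x, hx, by rw [← hxy]; simp [pre]⟩
  · refine absurd ?_ (hsuf i (by omega))
    rw [hn, hwy, ← pre_succ, drop_pre, pre_eq_pre_iff]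
    exact hib

end Language

section OneDiv

variable {β : ℝ}

theorem one_div_mem_Ico (hβ : 1 < β) : 1 / β ∈ Set.Ico (0 : ℝ) 1 :=
  ⟨by positivity, (div_lt_one (by linarith)).2 hβ⟩

theorem iterate_T_succ_zero (hβ : 1 < β) : ∀ i, (T (1 / β) β)^[i + 1] 0 = 1 / β
  | 0 => by
    rw [Function.iterate_one, T, mul_zero, zero_add, Int.self_sub_floor, Int.fract_eq_self]
    exact one_div_mem_Ico hβ
  | i + 1 => by
    rw [Function.iterate_succ_apply', iterate_T_succ_zero hβ i, T, Int.self_sub_floor,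
      mul_one_div_cancel (by positivity), Int.fract_one_add, Int.fract_eq_self]
    exact one_div_mem_Ico hβ

theorem aSeq_zero (hβ : 1 < β) : aSeq (1 / β) β 0 = 0 := by
  rw [aSeq, iSeq, Function.iterate_zero, id, digit, mul_zero, zero_add,
    Int.floor_eq_zero_iff.2 (one_div_mem_Ico hβ)]
  rfl

theorem aSeq_succ (hβ : 1 < β) (i : ℕ) : aSeq (1 / β) β (i + 1) = 1 := by
  have h := one_div_mem_Ico hβ
  have : ⌊β * (1 / β) + 1 / β⌋ = 1 := by
    rw [mul_one_div_cancel (by positivity), Int.floor_eq_iff]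
    push_cast
    constructor <;> linarith [h.1, h.2]
  rw [aSeq, iSeq, iterate_T_succ_zero hβ, digit, this]
  rfl

theorem aSeq_le_one (hβ : 1 < β) : ∀ i, aSeq (1 / β) β i ≤ 1
  | 0 => (aSeq_zero hβ).trans_le zero_le_one
  | i + 1 => (aSeq_succ hβ i).le

theorem three_le_b_zero {α : ℝ} (hα : 0 ≤ α) (hβ : 3 < β) {b : ℕ → ℕ}
    (hb : Tendsto (iSeq α β) (𝓝[<] (1 : ℝ)) (𝓝 b)) : 3 ≤ b 0 := by
  have hβ0 : 0 < β := by linarith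
  obtain ⟨x, hxb, hx⟩ := ((eventually_iSeq_eq hb 0).and
    (Ioo_mem_nhdsLT ((div_lt_one hβ0).2 hβ))).exists
  have h3 : 3 < β * x := (div_lt_iff₀' hβ0).1 hx.1
  have : (3 : ℤ) ≤ ⌊β * x + α⌋ := Int.le_floor.2 (by push_cast; linarith)
  rw [← hxb, iSeq, Function.iterate_zero, id, digit]
  omega

theorem one_div_le_iterate_of_pre_aSeq (hβ : 1 < β) {y : ℝ} (hy : y ∈ Set.Ico (0 : ℝ) 1)
    {p k : ℕ} (h : ∀ j ≤ k, iSeq (1 / β) β y (p + j) = aSeq (1 / β) β j) :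
    1 / β ≤ (T (1 / β) β)^[p + k + 1] y := by
  have hT := iterate_T_succ (α := 1 / β) (β := β) (by positivity) (by positivity) hy
  induction k with
  | zero =>
    have hp := (iterate_T_mem_Ico (α := 1 / β) (β := β) hy p).1
    have h₀ := h 0 le_rfl
    rw [add_zero, aSeq_zero hβ] at h₀
    rw [add_zero, hT, h₀, Nat.cast_zero, sub_zero, le_add_iff_nonneg_left]
    positivity
  | succ k ih =>
    have ih := ih fun j hj => h j (by omega)
    have h₁ := h (k + 1) le_rfl
    rw [aSeq_succ hβ] at h₁
    have : 1 ≤ β * (T (1 / β) β)^[p + k + 1] y := by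
      calc (1 : ℝ) = β * (1 / β) := (mul_one_div_cancel (by positivity)).symm
        _ ≤ _ := by gcongr
    rw [hT, h₁, Nat.cast_one, ← add_assoc]
    linarith

theorem iSeq_ne_zero_of_pre_aSeq (hβ : 1 < β) {y : ℝ} (hy : y ∈ Set.Ico (0 : ℝ) 1) {p k : ℕ}
    (h : ∀ j ≤ k, iSeq (1 / β) β y (p + j) = aSeq (1 / β) β j) :
    iSeq (1 / β) β y (p + k + 1) ≠ 0 := by
  have hle := one_div_le_iterate_of_pre_aSeq hβ hy h
  have : (1 : ℤ) ≤ ⌊β * (T (1 / β) β)^[p + k + 1] y + 1 / β⌋ := by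
    refine Int.le_floor.2 ?_
    have : β * (1 / β) = 1 := mul_one_div_cancel (by positivity)
    push_cast
    nlinarith [(one_div_mem_Ico hβ).1]
  rw [iSeq, digit]
  omega

theorem drop_ne_pre_aSeq_append_zero (hβ : 1 < β) {w : List ℕ} (hw : w ∈ Lang (1 / β) β)
    (i k : ℕ) : w.drop i ≠ pre (aSeq (1 / β) β) (k + 1) ++ [0] := by
  obtain ⟨y, hy, hwy⟩ := mem_Lang_iff.1 hw
  intro h
  have hlen : w.length - i = k + 1 + 1 := by simpa [pre] using congrArg List.length h
  rw [hwy, drop_pre, hlen, pre_succ] at h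
  obtain ⟨hpre, hlast⟩ := List.append_inj' h rfl
  exact iSeq_ne_zero_of_pre_aSeq hβ hy (fun j hj => pre_eq_pre_iff.1 hpre j (Nat.lt_succ_of_le hj))
    (by simpa [add_assoc] using hlast)

end OneDiv

section Suffixes

variable {a b : ℕ → ℕ}

theorem kk_le_length (s : ℕ → ℕ) (w : List ℕ) : kk s w ≤ w.length :=
  Nat.findGreatest_le _

theorem drop_kk (s : ℕ → ℕ) (w : List ℕ) : w.drop (w.length - kk s w) = pre s (kk s w) :=
  Nat.findGreatest_spec (P := fun k => w.drop (w.length - k) = pre s k) (Nat.zero_le _)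
    (by simp [pre])

theorem le_kk {s : ℕ → ℕ} {w : List ℕ} {K : ℕ} (hK : K ≤ w.length)
    (h : w.drop (w.length - K) = pre s K) : K ≤ kk s w :=
  Nat.le_findGreatest hK h

theorem drop_concat_eq_pre_succ_iff {s : ℕ → ℕ} {v : List ℕ} {c K : ℕ} :
    (v ++ [c]).drop (v.length - K) = pre s (K + 1) ↔
      v.drop (v.length - K) = pre s K ∧ c = s K := by
  rw [List.drop_append_of_le_length (Nat.sub_le _ _), pre_succ]
  constructor
  · intro h
    obtain ⟨h₁, h₂⟩ := List.append_inj' h rfl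
    exact ⟨h₁, List.singleton_inj.1 h₂⟩
  · rintro ⟨h₁, rfl⟩
    rw [h₁]

theorem kk_concat_eq_succ {s : ℕ → ℕ} {v : List ℕ} {c K : ℕ} (h : kk s (v ++ [c]) = K + 1) :
    v.drop (v.length - K) = pre s K ∧ c = s K := by
  have hdrop := drop_kk s (v ++ [c])
  simp only [h, List.length_append, List.length_singleton, Nat.add_sub_add_right] at hdrop
  exact drop_concat_eq_pre_succ_iff.1 hdrop

theorem kk_lt_kk_of_sWord_mem_Pset {w : List ℕ} (hab : a 0 ≠ b 0)
    (hs : sWord a b w ∈ Pset a) (hne : sWord a b w ≠ []) : kk b w < kk a w := by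
  unfold sWord at hs hne
  split_ifs at hs hne with h₁ h₂
  · exact h₁
  · obtain ⟨l, hl⟩ := hs
    rw [drop_kk] at hl
    obtain rfl : kk b w = l := by simpa [pre] using congrArg List.length hl
    exact absurd (pre_eq_pre_iff.1 hl 0 (by omega)).symm hab
  · exact absurd rfl hne

theorem _root_.List.modifyLast_eq_dropLast_append {α : Type*} (f : α → α) {u : List α}
    (hu : u ≠ []) (d : α) : u.modifyLast f = u.dropLast ++ [f (u.getLast?.getD d)] := by
  obtain ⟨v, c, rfl⟩ := (List.eq_nil_or_concat' u).resolve_left hu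
  simp [List.modifyLast_concat]

theorem _root_.List.modifyLast_injective {α : Type*} {f : α → α} (hf : Function.Injective f) :
    Function.Injective (List.modifyLast f) := by
  intro u v h
  rcases List.eq_nil_or_concat' u with rfl | ⟨u, x, rfl⟩ <;>
    rcases List.eq_nil_or_concat' v with rfl | ⟨v, y, rfl⟩
  · rfl
  · exact (List.concat_ne_nil _ _ (h.trans (List.modifyLast_concat f y v)).symm).elim
  · exact (List.concat_ne_nil _ _ (h.symm.trans (List.modifyLast_concat f x u)).symm).elim
  · rw [List.modifyLast_concat, List.modifyLast_concat] at h
    obtain ⟨rfl, hxy⟩ := List.append_inj' h rfl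
    rw [hf (List.singleton_inj.1 hxy)]

theorem hatW_eq_modifyLast {lam : ℕ} {w : List ℕ} (h : kk b w < kk a w) :
    hatW a b lam w = w.modifyLast (· + 1) := by
  have hs : sWord a b w = w.drop (w.length - kk a w) := if_pos h
  have hlen : (w.drop (w.length - kk a w)).length = kk a w := by
    have := kk_le_length a w
    simp only [List.length_drop]
    omega
  have hne : w.drop (w.length - kk a w) ≠ [] := by
    rw [← List.length_pos_iff, hlen]
    omega
  rw [hatW, hs, hatP, if_neg hne, if_pos ⟨_, drop_kk a w⟩, hlen]
  conv_rhs => rw [← List.take_append_drop (w.length - kk a w) w,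
    List.modifyLast_append_of_right_ne_nil _ _ _ hne,
    List.modifyLast_eq_dropLast_append _ hne 0]

theorem drop_ne_pre_of_kk_lt (hab : ∀ j, a j ≠ b 0) {w : List ℕ} (h : kk b w < kk a w)
    {i : ℕ} (hi : i < w.length) : w.drop i ≠ pre b (w.length - i) := by
  intro hib
  have hK : w.length - i ≤ kk b w :=
    le_kk (Nat.sub_le _ _) (by rwa [Nat.sub_sub_self hi.le])
  have ha := kk_le_length a w
  have hsplit : w.drop i = (pre a (kk a w)).drop (i - (w.length - kk a w)) := by
    rw [← drop_kk a w, List.drop_drop]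
    congr 1
    omega
  rw [hsplit, drop_pre, show kk a w - (i - (w.length - kk a w)) = w.length - i by omega,
    pre_eq_pre_iff] at hib
  exact hab _ (hib 0 (by omega))

theorem sWord_eq_nil_or_mem_Pset {w : List ℕ} (h : kk a w = 0) :
    sWord a b w = [] ∨ sWord a b w ∈ Pset b ∧ sWord a b w ≠ [] := by
  unfold sWord
  rw [h]
  rcases Nat.eq_zero_or_pos (kk b w) with h₀ | hpos
  · simp [h₀]
  · rw [if_neg (by omega), if_pos hpos, drop_kk]
    exact Or.inr ⟨⟨_, rfl⟩, by simpa [pre] using hpos.ne'⟩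

end Suffixes

theorem kk_modifyLast_succ_eq_zero {β : ℝ} (hβ : 1 < β) {w : List ℕ}
    (hw : w ∈ Lang (1 / β) β) : kk (aSeq (1 / β) β) (w.modifyLast (· + 1)) = 0 := by
  rcases List.eq_nil_or_concat' w with rfl | ⟨v, c, rfl⟩
  · rfl
  rw [List.modifyLast_concat]
  by_contra hne
  obtain ⟨k, hk⟩ := Nat.exists_eq_succ_of_ne_zero hne
  obtain ⟨hv, hck⟩ := kk_concat_eq_succ hk
  have hc : c = 0 := by
    have := aSeq_le_one hβ k
    omega
  obtain ⟨k, rfl⟩ : ∃ k', k = k' + 1 :=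
    Nat.exists_eq_succ_of_ne_zero (by rintro rfl; rw [aSeq_zero hβ] at hck; omega)
  refine drop_ne_pre_aSeq_append_zero hβ hw (v.length - (k + 1)) k ?_
  rw [List.drop_append_of_le_length (Nat.sub_le _ _), hv, hc]

/-- `h = (·)^` restricted to `L^a` is injective, with image contained in
`L^ε ∪ L^b`. -/
theorem stmt8 (α β : ℝ) (hβ : 3 < β) (hα : α = 1 / β)
    (b : ℕ → ℕ) (hb : Tendsto (iSeq α β) (𝓝[<] (1 : ℝ)) (𝓝 b)) :
    Set.InjOn (hatW (aSeq α β) b (lamNat α β))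
      {w | w ∈ Lang α β ∧ sWord (aSeq α β) b w ∈ Pset (aSeq α β) ∧
        sWord (aSeq α β) b w ≠ []} ∧
    hatW (aSeq α β) b (lamNat α β) ''
        {w | w ∈ Lang α β ∧ sWord (aSeq α β) b w ∈ Pset (aSeq α β) ∧
          sWord (aSeq α β) b w ≠ []} ⊆
      {w | w ∈ Lang α β ∧ sWord (aSeq α β) b w = []} ∪
      {w | w ∈ Lang α β ∧ sWord (aSeq α β) b w ∈ Pset b ∧ sWord (aSeq α β) b w ≠ []} := by
  subst hα
  set a := aSeq (1 / β) β
  have hβ₁ : 1 < β := by linarith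
  have hb₀ := three_le_b_zero (by positivity) hβ hb
  have hab : ∀ j, a j ≠ b 0 := fun j => by
    have : a j ≤ 1 := aSeq_le_one hβ₁ j
    omega
  have hkk {w : List ℕ} (hs : sWord a b w ∈ Pset a) (hne : sWord a b w ≠ []) :
      kk b w < kk a w :=
    kk_lt_kk_of_sWord_mem_Pset (hab 0) hs hne
  refine ⟨fun w₁ h₁ w₂ h₂ h => ?_, ?_⟩
  · rw [hatW_eq_modifyLast (hkk h₁.2.1 h₁.2.2), hatW_eq_modifyLast (hkk h₂.2.1 h₂.2.2)] at h
    exact List.modifyLast_injective (add_left_injective 1) h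
  · rintro _ ⟨w, ⟨hw, hs, hne⟩, rfl⟩
    rw [hatW_eq_modifyLast (hkk hs hne)]
    have hmem := modifyLast_succ_mem_Lang (by positivity) (by positivity) hb hw
      fun i hi => drop_ne_pre_of_kk_lt hab (hkk hs hne) hi
    rcases sWord_eq_nil_or_mem_Pset (b := b) (kk_modifyLast_succ_eq_zero hβ₁ hw) with h | h
    · exact Or.inl ⟨hmem, h⟩
    · exact Or.inr ⟨hmem, h⟩

end AB
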